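/- If τ₁ and τ₂ are causal-equivalent traces and both are traces of a system S, then τ₁ and τ₂ are S-equivalent, i.e., they lead from the initial configuration of S to the same configuration. -/
import Mathlib


/-! Communicating finite state machines: messages, traces, systems. -/

structure MessageSet where
  msgs : Finset ℕ
  p : ℕ
  src : ℕ → ℕ
  dst : ℕ → ℕ

def MessageSet.WF (M : MessageSet) : Prop :=
  1 ≤ M.p ∧ ∀ a ∈ M.msgs, M.src a ≠ M.dst a ∧ M.src a < M.p ∧ M.dst a < M.p

inductive Act where
  | send (a : ℕ)
  | recv (a : ℕ)
deriving DecidableEq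

abbrev Trace := List Act

def Act.msg : Act → ℕ
  | .send a => a
  | .recv a => a

def peerOf (M : MessageSet) : Act → ℕ
  | .send a => M.src a
  | .recv a => M.dst a

/-- Send projection: the sequence of messages sent in a trace. -/
def sendProj (τ : Trace) : List ℕ :=
  τ.filterMap (fun α => match α with | .send a => some a | .recv _ => none)

/-- Projection of a trace on the actions of peer `i`. -/
def projPeer (M : MessageSet) (i : ℕ) (τ : Trace) : Trace :=
  τ.filter (fun α => peerOf M α = i)

def sentOn (M : MessageSet) (i j : ℕ) (τ : Trace) : List ℕ :=
  τ.filterMap (fun α => match α with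
    | .send a => if M.src a = i ∧ M.dst a = j then some a else none
    | .recv _ => none)

def recvOn (M : MessageSet) (i j : ℕ) (τ : Trace) : List ℕ :=
  τ.filterMap (fun α => match α with
    | .recv a => if M.src a = i ∧ M.dst a = j then some a else none
    | .send _ => none)

/-- A trace is FIFO if on every channel, in every prefix, the receives form a
prefix of the sends. -/
def Fifo (M : MessageSet) (τ : Trace) : Prop :=
  ∀ τ', τ' <+: τ → ∀ i j, recvOn M i j τ' <+: sentOn M i j τ'

/-- `k`-bounded FIFO trace: the buffer of each channel never exceeds `k`. -/
def BoundedFifo (M : MessageSet) (k : ℕ) (τ : Trace) : Prop :=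
  Fifo M τ ∧ ∀ τ', τ' <+: τ → ∀ i j,
    (sentOn M i j τ').length ≤ (recvOn M i j τ').length + k

/-- `!?a₁ ⬝ !?a₂ ⋯ !?aₙ` -/
def syncOf (l : List ℕ) : Trace := l.flatMap (fun a => [Act.send a, Act.recv a])

def Synchronous (τ : Trace) : Prop := ∃ l : List ℕ, τ = syncOf l

def CausalEquiv (M : MessageSet) (τ₁ τ₂ : Trace) : Prop :=
  Fifo M τ₁ ∧ Fifo M τ₂ ∧ ∀ i, projPeer M i τ₁ = projPeer M i τ₂

/-- A system of communicating machines: for each peer `i`, an initial state and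
a transition relation (all states are accepting). -/
structure System where
  init : ℕ → ℕ
  delta : ℕ → ℕ → Act → ℕ → Prop

/-- Well-formedness: peer `i` performs only actions of peer `i`, on messages of `M`. -/
def System.WF (S : System) (M : MessageSet) : Prop :=
  ∀ i q α q', S.delta i q α q' → peerOf M α = i ∧ α.msg ∈ M.msgs

/-- The machines are finite-state. -/
def System.FiniteDelta (S : System) : Prop :=
  Set.Finite {x : ℕ × ℕ × Act × ℕ | S.delta x.1 x.2.1 x.2.2.1 x.2.2.2}

/-- A configuration: local states, and one FIFO buffer per channel `(i,j)`. -/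
abbrev Config := (ℕ → ℕ) × (ℕ → ℕ → List ℕ)

def Stable (c : Config) : Prop := ∀ i j, c.2 i j = []

def Step (M : MessageSet) (S : System) (c : Config) : Act → Config → Prop
  | .send a, c' =>
      S.delta (M.src a) (c.1 (M.src a)) (.send a) (c'.1 (M.src a)) ∧
      (∀ k, k ≠ M.src a → c'.1 k = c.1 k) ∧
      c'.2 (M.src a) (M.dst a) = c.2 (M.src a) (M.dst a) ++ [a] ∧
      (∀ k l, ¬(k = M.src a ∧ l = M.dst a) → c'.2 k l = c.2 k l)
  | .recv a, c' =>
      S.delta (M.dst a) (c.1 (M.dst a)) (.recv a) (c'.1 (M.dst a)) ∧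
      (∀ k, k ≠ M.dst a → c'.1 k = c.1 k) ∧
      c.2 (M.src a) (M.dst a) = a :: c'.2 (M.src a) (M.dst a) ∧
      (∀ k l, ¬(k = M.src a ∧ l = M.dst a) → c'.2 k l = c.2 k l)

inductive Exec (M : MessageSet) (S : System) : Config → Trace → Config → Prop
  | refl (c : Config) : Exec M S c [] c
  | step {c c' c'' : Config} {α : Act} {τ : Trace} :
      Step M S c α c' → Exec M S c' τ c'' → Exec M S c (α :: τ) c''

def initConfig (S : System) : Config := (S.init, fun _ _ => [])

def TraceOf (M : MessageSet) (S : System) (τ : Trace) : Prop :=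
  ∃ c, Exec M S (initConfig S) τ c

/-- `Trk M S 0` = synchronous traces; `Trk M S k` (`k ≥ 1`) = `k`-bounded traces. -/
def Trk (M : MessageSet) (S : System) : ℕ → Trace → Prop
  | 0, τ => TraceOf M S τ ∧ Synchronous τ
  | (k+1), τ => TraceOf M S τ ∧ BoundedFifo M (k+1) τ

def Trω (M : MessageSet) (S : System) (τ : Trace) : Prop := ∃ k, Trk M S k τ

/-- Two traces are `S`-equivalent if they lead from the initial configuration to
a common configuration. -/
def SEquiv (M : MessageSet) (S : System) (τ₁ τ₂ : Trace) : Prop :=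
  ∃ c, Exec M S (initConfig S) τ₁ c ∧ Exec M S (initConfig S) τ₂ c

/-- Send-trace language. -/
def STw (M : MessageSet) (S : System) (T : Trace → Prop) : Set (List ℕ) :=
  {w | ∃ τ, T τ ∧ sendProj τ = w}

/-- Send traces enriched with the reached stable configurations. -/
def STc (M : MessageSet) (S : System) (T : Trace → Prop) :
    Set (List ℕ ⊕ List ℕ × Config) :=
  {x | (∃ τ, T τ ∧ x = Sum.inl (sendProj τ)) ∨
       (∃ τ c, T τ ∧ Exec M S (initConfig S) τ c ∧ Stable c ∧
          x = Sum.inr (sendProj τ, c))}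

def kSync (M : MessageSet) (S : System) (k : ℕ) : Prop :=
  STc M S (Trk M S 0) = STc M S (Trk M S k)

def Synchronizable (M : MessageSet) (S : System) : Prop :=
  STc M S (Trk M S 0) = STc M S (Trω M S)

def LangSync (M : MessageSet) (S : System) : Prop :=
  STw M S (Trk M S 0) = STw M S (Trω M S)

inductive Shuffle : List Act → List Act → List Act → Prop
  | nil : Shuffle [] [] []
  | left {u v w : List Act} (a : Act) : Shuffle u v w → Shuffle (a :: u) v (a :: w)
  | right {u v w : List Act} (b : Act) : Shuffle u v w → Shuffle u (b :: v) (b :: w)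

inductive NShuffle : List ℕ → List ℕ → List ℕ → Prop
  | nil : NShuffle [] [] []
  | left {u v w : List ℕ} (a : ℕ) : NShuffle u v w → NShuffle (a :: u) v (a :: w)
  | right {u v w : List ℕ} (b : ℕ) : NShuffle u v w → NShuffle u (b :: v) (b :: w)

inductive PPath (S : System) (i : ℕ) : ℕ → Trace → Prop
  | nil (q : ℕ) : PPath S i q []
  | cons {q q' : ℕ} {α : Act} {w : Trace} :
      S.delta i q α q' → PPath S i q' w → PPath S i q (α :: w)

/-- The language of peer `i` (all states accepting). -/
def Lang (S : System) (i : ℕ) : Set Trace := {w | PPath S i (S.init i) w}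

def prefCl (L : Set Trace) : Set Trace := {w | ∃ v ∈ L, w <+: v}

def OrientedRing (M : MessageSet) : Prop :=
  1 ≤ M.p ∧ ∀ i j, (∃ a ∈ M.msgs, M.src a = i ∧ M.dst a = j) ↔
    (i < M.p ∧ j = (i + 1) % M.p)

/-! Auxiliary machinery for Statement 2. -/

/-- Path of peer `i` with recorded endpoint. -/
inductive StPath (S : System) (i : ℕ) : ℕ → Trace → ℕ → Prop
  | nil (q : ℕ) : StPath S i q [] q
  | cons {q q' q'' : ℕ} {α : Act} {w : Trace} :
      S.delta i q α q' → StPath S i q' w q'' → StPath S i q (α :: w) q''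

lemma projPeer_cons (M : MessageSet) (i : ℕ) (α : Act) (τ : Trace) :
    projPeer M i (α :: τ) =
      if peerOf M α = i then α :: projPeer M i τ else projPeer M i τ := by
  by_cases hc : peerOf M α = i <;> simp [projPeer, List.filter_cons, hc]

lemma sentOn_cons_send (M : MessageSet) (i j a : ℕ) (τ : Trace) :
    sentOn M i j (.send a :: τ) =
      if M.src a = i ∧ M.dst a = j then a :: sentOn M i j τ else sentOn M i j τ := by
  by_cases hc : M.src a = i ∧ M.dst a = j <;>
    simp [sentOn, List.filterMap_cons, hc]

lemma sentOn_cons_recv (M : MessageSet) (i j a : ℕ) (τ : Trace) :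
    sentOn M i j (.recv a :: τ) = sentOn M i j τ := by
  simp [sentOn, List.filterMap_cons]

lemma recvOn_cons_recv (M : MessageSet) (i j a : ℕ) (τ : Trace) :
    recvOn M i j (.recv a :: τ) =
      if M.src a = i ∧ M.dst a = j then a :: recvOn M i j τ else recvOn M i j τ := by
  by_cases hc : M.src a = i ∧ M.dst a = j <;>
    simp [recvOn, List.filterMap_cons, hc]

lemma recvOn_cons_send (M : MessageSet) (i j a : ℕ) (τ : Trace) :
    recvOn M i j (.send a :: τ) = recvOn M i j τ := by
  simp [recvOn, List.filterMap_cons]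

lemma sentOn_projPeer (M : MessageSet) (i j : ℕ) (τ : Trace) :
    sentOn M i j (projPeer M i τ) = sentOn M i j τ := by
  induction τ with
  | nil => rfl
  | cons α τ ih =>
    cases α with
    | send a =>
      rw [projPeer_cons]
      by_cases hi : peerOf M (.send a) = i
      · rw [if_pos hi, sentOn_cons_send, sentOn_cons_send]
        by_cases hc : M.src a = i ∧ M.dst a = j
        · rw [if_pos hc, if_pos hc, ih]
        · rw [if_neg hc, if_neg hc, ih]
      · have hsrc : ¬ (M.src a = i ∧ M.dst a = j) := fun hc => hi hc.1
        rw [if_neg hi, sentOn_cons_send, if_neg hsrc, ih]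
    | recv a =>
      rw [projPeer_cons, sentOn_cons_recv]
      by_cases hi : peerOf M (.recv a) = i
      · rw [if_pos hi, sentOn_cons_recv, ih]
      · rw [if_neg hi, ih]

lemma recvOn_projPeer (M : MessageSet) (i j : ℕ) (τ : Trace) :
    recvOn M i j (projPeer M j τ) = recvOn M i j τ := by
  induction τ with
  | nil => rfl
  | cons α τ ih =>
    cases α with
    | recv a =>
      rw [projPeer_cons]
      by_cases hi : peerOf M (.recv a) = j
      · rw [if_pos hi, recvOn_cons_recv, recvOn_cons_recv]
        by_cases hc : M.src a = i ∧ M.dst a = j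
        · rw [if_pos hc, if_pos hc, ih]
        · rw [if_neg hc, if_neg hc, ih]
      · have hdst : ¬ (M.src a = i ∧ M.dst a = j) := fun hc => hi hc.2
        rw [if_neg hi, recvOn_cons_recv, if_neg hdst, ih]
    | send a =>
      rw [projPeer_cons, recvOn_cons_send]
      by_cases hi : peerOf M (.send a) = j
      · rw [if_pos hi, recvOn_cons_send, ih]
      · rw [if_neg hi, ih]

/-- Each peer follows a delta-path along its projection in any execution. -/
lemma exec_stPath {M : MessageSet} {S : System} {c c' : Config} {τ : Trace}
    (hex : Exec M S c τ c') : ∀ i, StPath S i (c.1 i) (projPeer M i τ) (c'.1 i) := by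
  induction hex with
  | refl c => intro i; exact StPath.nil _
  | @step c c' c'' α τ hstep hex ih =>
    intro i
    cases α with
    | send a =>
      obtain ⟨hδ, hst, hb1, hb2⟩ := hstep
      rw [projPeer_cons]
      by_cases hi : peerOf M (.send a) = i
      · rw [if_pos hi]
        have hi' : M.src a = i := hi
        subst hi'
        exact StPath.cons hδ (ih _)
      · rw [if_neg hi]
        have hne : i ≠ M.src a := fun hh => hi hh.symm
        have := hst i hne
        rw [← this]
        exact ih i
    | recv a =>
      obtain ⟨hδ, hst, hb1, hb2⟩ := hstep
      rw [projPeer_cons]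
      by_cases hi : peerOf M (.recv a) = i
      · rw [if_pos hi]
        have hi' : M.dst a = i := hi
        subst hi'
        exact StPath.cons hδ (ih _)
      · rw [if_neg hi]
        have hne : i ≠ M.dst a := fun hh => hi hh.symm
        have := hst i hne
        rw [← this]
        exact ih i

/-- Buffer bookkeeping along an execution. -/
lemma exec_buffers {M : MessageSet} {S : System} {c c' : Config} {τ : Trace}
    (hex : Exec M S c τ c') :
    ∀ i j, c.2 i j ++ sentOn M i j τ = recvOn M i j τ ++ c'.2 i j := by
  induction hex with
  | refl c => intro i j; simp [sentOn, recvOn]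
  | @step c c' c'' α τ hstep hex ih =>
    intro i j
    cases α with
    | send a =>
      obtain ⟨hδ, hst, hb1, hb2⟩ := hstep
      rw [sentOn_cons_send, recvOn_cons_send]
      by_cases hc : M.src a = i ∧ M.dst a = j
      · obtain ⟨hi, hj⟩ := hc
        subst hi; subst hj
        rw [if_pos ⟨rfl, rfl⟩]
        have : c.2 (M.src a) (M.dst a) ++ a :: sentOn M (M.src a) (M.dst a) τ =
            (c.2 (M.src a) (M.dst a) ++ [a]) ++ sentOn M (M.src a) (M.dst a) τ := by
          simp
        rw [this, ← hb1]
        exact ih _ _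
      · rw [if_neg hc, ← hb2 i j (fun hh => hc ⟨hh.1.symm, hh.2.symm⟩)]
        exact ih i j
    | recv a =>
      obtain ⟨hδ, hst, hb1, hb2⟩ := hstep
      rw [sentOn_cons_recv, recvOn_cons_recv]
      by_cases hc : M.src a = i ∧ M.dst a = j
      · obtain ⟨hi, hj⟩ := hc
        subst hi; subst hj
        rw [if_pos ⟨rfl, rfl⟩, hb1]
        simp only [List.cons_append]
        exact congrArg (a :: ·) (ih _ _)
      · rw [if_neg hc, ← hb2 i j (fun hh => hc ⟨hh.1.symm, hh.2.symm⟩)]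
        exact ih i j

lemma stPath_nil {S : System} {i q q' : ℕ} (h : StPath S i q [] q') : q' = q := by
  cases h; rfl

/-- Transport: an execution of `τ` can be replayed from any configuration with
the same buffers, following any delta-paths compatible with the projections. -/
lemma exec_transport {M : MessageSet} {S : System} :
    ∀ {τ : Trace} {cw cw' : Config}, Exec M S cw τ cw' →
    ∀ c : Config, c.2 = cw.2 → ∀ q : ℕ → ℕ,
      (∀ i, StPath S i (c.1 i) (projPeer M i τ) (q i)) →
      Exec M S c τ (q, cw'.2) := by
  intro τ cw cw' hex
  induction hex with
  | refl cw =>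
    intro c hbuf q hq
    have hqi : ∀ i, q i = c.1 i := by
      intro i
      have hh := hq i
      simp only [projPeer, List.filter_nil] at hh
      exact stPath_nil hh
    have heq : (q, cw.2) = c := by
      obtain ⟨c1, c2⟩ := c
      simp only [Prod.mk.injEq]
      exact ⟨funext fun i => hqi i, hbuf.symm⟩
    rw [heq]
    exact Exec.refl _
  | @step cw cwm cw' α τ hstep hex ih =>
    intro c hbuf q hq
    cases α with
    | send a =>
      obtain ⟨hδ, hst, hb1, hb2⟩ := hstep
      have hqi := hq (M.src a)
      rw [projPeer_cons] at hqi
      simp only [peerOf] at hqi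
      rw [if_pos trivial] at hqi
      cases hqi with
      | cons hδc hrest =>
        rename_i q₁
        refine Exec.step (c' := (Function.update c.1 (M.src a) q₁,
          fun k l => if k = M.src a ∧ l = M.dst a then c.2 k l ++ [a] else c.2 k l))
          ?_ ?_
        · refine ⟨?_, ?_, ?_, ?_⟩
          · simpa [Function.update_self] using hδc
          · intro k hk; exact Function.update_of_ne hk _ _
          · simp
          · intro k l hkl; simp [if_neg hkl]
        · apply ih
          · funext k l
            by_cases hkl : k = M.src a ∧ l = M.dst a
            · obtain ⟨hk, hl⟩ := hkl; subst hk; subst hl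
              show (if M.src a = M.src a ∧ M.dst a = M.dst a
                  then c.2 (M.src a) (M.dst a) ++ [a]
                  else c.2 (M.src a) (M.dst a)) = cwm.2 (M.src a) (M.dst a)
              rw [if_pos (⟨rfl, rfl⟩ : M.src a = M.src a ∧ M.dst a = M.dst a),
                hb1, hbuf]
            · simp only [if_neg hkl]
              rw [hbuf]
              exact (hb2 k l hkl).symm
          · intro j
            by_cases hj : j = M.src a
            · subst hj
              simpa [Function.update_self] using hrest
            · simp only [Function.update_of_ne hj]
              have hqj := hq j
              rw [projPeer_cons,
                if_neg (fun hh : peerOf M (.send a) = j => hj hh.symm)] at hqj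
              exact hqj
    | recv a =>
      obtain ⟨hδ, hst, hb1, hb2⟩ := hstep
      have hqi := hq (M.dst a)
      rw [projPeer_cons] at hqi
      simp only [peerOf] at hqi
      rw [if_pos trivial] at hqi
      cases hqi with
      | cons hδc hrest =>
        rename_i q₁
        have hbsd : c.2 (M.src a) (M.dst a) = a :: cwm.2 (M.src a) (M.dst a) := by
          rw [hbuf]; exact hb1
        refine Exec.step (c' := (Function.update c.1 (M.dst a) q₁,
          fun k l => if k = M.src a ∧ l = M.dst a then (c.2 k l).tail else c.2 k l))
          ?_ ?_
        · refine ⟨?_, ?_, ?_, ?_⟩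
          · simpa [Function.update_self] using hδc
          · intro k hk; exact Function.update_of_ne hk _ _
          · show c.2 (M.src a) (M.dst a) = a ::
              (if M.src a = M.src a ∧ M.dst a = M.dst a
                then (c.2 (M.src a) (M.dst a)).tail else c.2 (M.src a) (M.dst a))
            rw [if_pos (⟨rfl, rfl⟩ : M.src a = M.src a ∧ M.dst a = M.dst a), hbsd]
            rfl
          · intro k l hkl; simp [if_neg hkl]
        · apply ih
          · funext k l
            by_cases hkl : k = M.src a ∧ l = M.dst a
            · obtain ⟨hk, hl⟩ := hkl; subst hk; subst hl
              show (if M.src a = M.src a ∧ M.dst a = M.dst a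
                  then (c.2 (M.src a) (M.dst a)).tail
                  else c.2 (M.src a) (M.dst a)) = cwm.2 (M.src a) (M.dst a)
              rw [if_pos (⟨rfl, rfl⟩ : M.src a = M.src a ∧ M.dst a = M.dst a),
                hbsd]
              rfl
            · simp only [if_neg hkl]
              rw [hbuf]
              exact (hb2 k l hkl).symm
          · intro j
            by_cases hj : j = M.dst a
            · subst hj
              simpa [Function.update_self] using hrest
            · simp only [Function.update_of_ne hj]
              have hqj := hq j
              rw [projPeer_cons,
                if_neg (fun hh : peerOf M (.recv a) = j => hj hh.symm)] at hqj
              exact hqj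

/-- causal-equivalent traces of a system are S-equivalent. -/
theorem causalEquiv_implies_sEquiv (M : MessageSet) (S : System)
    (τ₁ τ₂ : Trace) (h : CausalEquiv M τ₁ τ₂)
    (h₁ : TraceOf M S τ₁) (h₂ : TraceOf M S τ₂) :
    SEquiv M S τ₁ τ₂ := by
  obtain ⟨hf1, hf2, hproj⟩ := h
  obtain ⟨c₁, hex₁⟩ := h₁
  obtain ⟨c₂, hex₂⟩ := h₂
  -- Final buffers agree, since they are determined by the per-channel
  -- send/receive sequences, which depend only on the peer projections.
  have hsent : ∀ i j, sentOn M i j τ₁ = sentOn M i j τ₂ := by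
    intro i j
    rw [← sentOn_projPeer M i j τ₁, hproj i, sentOn_projPeer]
  have hrecv : ∀ i j, recvOn M i j τ₁ = recvOn M i j τ₂ := by
    intro i j
    rw [← recvOn_projPeer M i j τ₁, hproj j, recvOn_projPeer]
  have hbuf : c₂.2 = c₁.2 := by
    funext i j
    have hB1 := exec_buffers hex₁ i j
    have hB2 := exec_buffers hex₂ i j
    simp only [initConfig, List.nil_append] at hB1 hB2
    have : recvOn M i j τ₂ ++ c₁.2 i j = recvOn M i j τ₂ ++ c₂.2 i j := by
      rw [← hB2, ← hsent i j, hB1, hrecv i j]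
    exact (List.append_cancel_left this).symm
  -- Replay τ₂ following τ₁'s state choices.
  have hq : ∀ i, StPath S i ((initConfig S).1 i) (projPeer M i τ₂) (c₁.1 i) := by
    intro i
    have := exec_stPath hex₁ i
    rwa [hproj i] at this
  have hex₂' : Exec M S (initConfig S) τ₂ (c₁.1, c₂.2) :=
    exec_transport hex₂ (initConfig S) rfl c₁.1 hq
  rw [hbuf] at hex₂'
  exact ⟨c₁, hex₁, hex₂'⟩
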